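/- For real x, t, the real parts of both L₁ and L₂ in the second-order rogue wave grow like 8x⁶ for fixed t as x → ±∞; consequently |L₂(x,t)|/|L₁(x,t)| → 1 as x → ±∞ for each fixed t, i.e., |q₂(x,t)| → 1 as x → ±∞. -/

import Mathlib

open Complex

noncomputable def L1second (x t : ℝ) : ℂ :=
  ((9 + 90*x^2 - 12*x^4 + 666*t^2 + 180*t^4 + 8*x^6 + 8*t^6 - 216*x^2*t^2 - 72*x*t
      + 24*x^4*t^2 + 48*x^3*t + 48*x*t^3 + 24*x^2*t^4 : ℝ) : ℂ)
  + Complex.I * ((-54*x + 24*t*x^4 + 288*t^2*x - 24*t^4*x - 24*x^5 - 48*x^3 + 198*t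
      + 24*t^5 + 48*t^3*x^2 + 336*t^3 : ℝ) : ℂ)

noncomputable def L2second (x t : ℝ) : ℂ :=
  ((45 - 198*x^2 - 60*x^4 - 486*t^2 - 60*t^4 + 8*x^6 + 8*t^6 - 504*x^2*t^2 + 504*x*t
      + 24*x^4*t^2 - 144*x^3*t - 144*x*t^3 + 24*x^2*t^4 : ℝ) : ℂ)
  + Complex.I * ((-48*x^3 + 528*t^3 + 72*t^5 - 414*t + 72*t*x^4 + 144*t^3*x^2 + 24*t^4*x
      + 48*t^2*x^3 - 576*t^2*x - 288*x^2*t - 90*x + 24*x^5 : ℝ) : ℂ)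

/-- The second-order rogue wave of the DNLS equation (with `a = c = 1`). -/
noncomputable def q2second (x t : ℝ) : ℂ :=
  (starRingEnd ℂ) (L1second x t) * L2second x t / (L1second x t) ^ 2
    * Complex.exp (Complex.I * (x : ℂ))

open Filter Topology

/-!
`L₁(x, t)` and `L₂(x, t)` both have degree `6` in `x`, with the same leading coefficient `8`.
Hence `x⁻⁶ Lᵢ(x, t)` is a polynomial in `1/x` with constant term `8`, so it tends to `8` as
`|x| → ∞` and `L₂/L₁ → 1`. Since `|conj L₁| = |L₁|` and `|e^{ix}| = 1`, `|q₂| = |L₂|/|L₁|`.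
-/

open Bornology

theorem tendsto_norm_div_norm_of_tendsto_div {α 𝕜 : Type*} [NormedField 𝕜] {l : Filter α}
    {f g w : α → 𝕜} {c : 𝕜} (hc : c ≠ 0) (hw : ∀ᶠ x in l, w x ≠ 0)
    (hf : Tendsto (fun x => f x / w x) l (𝓝 c)) (hg : Tendsto (fun x => g x / w x) l (𝓝 c)) :
    Tendsto (fun x => ‖g x‖ / ‖f x‖) l (𝓝 1) := by
  have h := (hg.div hf hc).norm
  rw [div_self hc, norm_one] at h
  refine h.congr' ?_
  filter_upwards [hw] with x hx
  rw [Pi.div_apply, div_div_div_cancel_right₀ hx, norm_div]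

theorem tendsto_ofReal_inv_cobounded :
    Tendsto (fun x : ℝ => (x : ℂ)⁻¹) (cobounded ℝ) (𝓝 0) := by
  simpa [Function.comp_def] using
    (Complex.continuous_ofReal.tendsto 0).comp (tendsto_inv₀_cobounded (α := ℝ))

-- `u ↦ u ^ 6 * L1second u⁻¹ t`, the reversal of `L1second · t` as a polynomial of degree 6
noncomputable def L1secondRev (t : ℝ) (u : ℂ) : ℂ :=
  8 + 9*u^6 + 90*u^4 - 12*u^2 + 666*t^2*u^6 + 180*t^4*u^6 + 8*t^6*u^6
    - 216*t^2*u^4 - 72*t*u^5 + 24*t^2*u^2 + 48*t*u^3 + 48*t^3*u^5 + 24*t^4*u^4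
  + Complex.I * (-54*u^5 + 24*t*u^2 + 288*t^2*u^5 - 24*t^4*u^5 - 24*u - 48*u^3
      + 198*t*u^6 + 24*t^5*u^6 + 48*t^3*u^4 + 336*t^3*u^6)

-- `u ↦ u ^ 6 * L2second u⁻¹ t`
noncomputable def L2secondRev (t : ℝ) (u : ℂ) : ℂ :=
  8 + 45*u^6 - 198*u^4 - 60*u^2 - 486*t^2*u^6 - 60*t^4*u^6 + 8*t^6*u^6
    - 504*t^2*u^4 + 504*t*u^5 + 24*t^2*u^2 - 144*t*u^3 - 144*t^3*u^5 + 24*t^4*u^4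
  + Complex.I * (-48*u^3 + 528*t^3*u^6 + 72*t^5*u^6 - 414*t*u^6 + 72*t*u^2
      + 144*t^3*u^4 + 24*t^4*u^5 + 48*t^2*u^3 - 576*t^2*u^5 - 288*t*u^4 - 90*u^5 + 24*u)

theorem L1second_div_pow_six {x : ℝ} (hx : x ≠ 0) (t : ℝ) :
    L1second x t / (x : ℂ) ^ 6 = L1secondRev t (x : ℂ)⁻¹ := by
  have hx' : (x : ℂ) ≠ 0 := Complex.ofReal_ne_zero.mpr hx
  unfold L1second L1secondRev
  push_cast
  field_simp
  ring

theorem L2second_div_pow_six {x : ℝ} (hx : x ≠ 0) (t : ℝ) :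
    L2second x t / (x : ℂ) ^ 6 = L2secondRev t (x : ℂ)⁻¹ := by
  have hx' : (x : ℂ) ≠ 0 := Complex.ofReal_ne_zero.mpr hx
  unfold L2second L2secondRev
  push_cast
  field_simp
  ring

theorem tendsto_div_pow_cobounded_of_eq_comp_inv {f : ℝ → ℂ} {r : ℂ → ℂ} {n : ℕ}
    (hr : Continuous r) (hfr : ∀ x : ℝ, x ≠ 0 → f x / (x : ℂ) ^ n = r (x : ℂ)⁻¹) :
    Tendsto (fun x : ℝ => f x / (x : ℂ) ^ n) (cobounded ℝ) (𝓝 (r 0)) := by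
  refine ((hr.tendsto 0).comp tendsto_ofReal_inv_cobounded).congr' ?_
  filter_upwards [eventually_ne_cobounded 0] with x hx
  exact (hfr x hx).symm

theorem tendsto_L1second_div_pow_six (t : ℝ) :
    Tendsto (fun x : ℝ => L1second x t / (x : ℂ) ^ 6) (cobounded ℝ) (𝓝 8) := by
  have h := tendsto_div_pow_cobounded_of_eq_comp_inv (f := (L1second · t))
    (r := L1secondRev t) (by unfold L1secondRev; fun_prop)
    fun _ hx => L1second_div_pow_six hx t
  simpa [L1secondRev] using h

theorem tendsto_L2second_div_pow_six (t : ℝ) :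
    Tendsto (fun x : ℝ => L2second x t / (x : ℂ) ^ 6) (cobounded ℝ) (𝓝 8) := by
  have h := tendsto_div_pow_cobounded_of_eq_comp_inv (f := (L2second · t))
    (r := L2secondRev t) (by unfold L2secondRev; fun_prop)
    fun _ hx => L2second_div_pow_six hx t
  simpa [L2secondRev] using h

theorem tendsto_norm_L2second_div_norm_L1second (t : ℝ) :
    Tendsto (fun x => ‖L2second x t‖ / ‖L1second x t‖) (cobounded ℝ) (𝓝 1) :=
  tendsto_norm_div_norm_of_tendsto_div (by norm_num)
    ((eventually_ne_cobounded 0).mono fun _ hx => pow_ne_zero 6 (Complex.ofReal_ne_zero.mpr hx))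
    (tendsto_L1second_div_pow_six t) (tendsto_L2second_div_pow_six t)

theorem norm_q2second (x t : ℝ) : ‖q2second x t‖ = ‖L2second x t‖ / ‖L1second x t‖ := by
  rw [q2second, norm_mul, Complex.norm_exp_I_mul_ofReal, mul_one, norm_div, norm_mul,
    Complex.norm_conj, norm_pow]
  rcases eq_or_ne ‖L1second x t‖ 0 with h | h
  · simp [h]
  · field_simp

theorem second_order_rogue_wave_asymptotics_general :
    ∀ t : ℝ,
      Tendsto (fun x => ‖L2second x t‖ / ‖L1second x t‖) atTop (𝓝 1) ∧
      Tendsto (fun x => ‖L2second x t‖ / ‖L1second x t‖) atBot (𝓝 1) ∧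
      Tendsto (fun x => ‖q2second x t‖) atTop (𝓝 1) ∧
      Tendsto (fun x => ‖q2second x t‖) atBot (𝓝 1) := by
  intro t
  have hTop := (tendsto_norm_L2second_div_norm_L1second t).mono_left
    IsOrderBornology.atTop_le_cobounded
  have hBot := (tendsto_norm_L2second_div_norm_L1second t).mono_left
    IsOrderBornology.atBot_le_cobounded
  simp only [norm_q2second]
  exact ⟨hTop, hBot, hTop, hBot⟩

/-- For each fixed `t`, `|L₂(x,t)|/|L₁(x,t)| → 1` as `x → ±∞`; consequently
`|q₂(x,t)| → 1` as `x → ±∞` (assuming `L₁` never vanishes on `ℝ²`). -/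
theorem second_order_rogue_wave_asymptotics
    (hL : ∀ x t : ℝ, L1second x t ≠ 0) :
    ∀ t : ℝ,
      Tendsto (fun x => ‖L2second x t‖ / ‖L1second x t‖) atTop (𝓝 1) ∧
      Tendsto (fun x => ‖L2second x t‖ / ‖L1second x t‖) atBot (𝓝 1) ∧
      Tendsto (fun x => ‖q2second x t‖) atTop (𝓝 1) ∧
      Tendsto (fun x => ‖q2second x t‖) atBot (𝓝 1) :=
  second_order_rogue_wave_asymptotics_general
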